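/- arXiv:0707.0845 — 7 statements merged into one kernel-verified Lean document; each statement's English description precedes it below -/
import Mathlib

section
/- If B ∈ GL_n(ℝ) acts on ℝⁿ linearly and on (ℝ_{>0})ⁿ by the conjugated map B̄ = Exp ∘ B ∘ Log (componentwise exponential and logarithm), then for any V ⊆ (ℝ_{>0})ⁿ one has B(A₀(V)) = A₀(B̄(V)). -/
/-! Taking logarithms conjugates `B̄` back to the linear map `B`: the rescaled logarithm
`c • Log (B̄ x)` equals `B (c • Log x)`. Hence sequences witnessing `y ∈ A₀(V)` are carried by
`B̄` to sequences witnessing `B y ∈ A₀(B̄ V)`, by continuity of `B`; conversely, the continuity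
of `B⁻¹` pulls witnesses back. -/

open Filter Topology

/-- The logarithmic limit set of `V ⊆ (ℝ_{>0})ⁿ`, via the sequence characterization. -/
def logLimit {n : ℕ} (V : Set (Fin n → ℝ)) : Set (Fin n → ℝ) :=
  {y | ∃ (x : ℕ → Fin n → ℝ) (t : ℕ → ℝ),
    (∀ k, x k ∈ V) ∧ (∀ k, t k ∈ Set.Ioo (0 : ℝ) 1) ∧
    Tendsto t atTop (𝓝 0) ∧
    Tendsto (fun k => fun i => (-1 / Real.log (t k)) * Real.log (x k i)) atTop (𝓝 y)}

open Matrix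

section ConjugatedAction

variable {ι : Type*} [Fintype ι]

noncomputable def scaledLog (c : ℝ) (x : ι → ℝ) : ι → ℝ := fun i => c * Real.log (x i)

noncomputable def expMulVecLog (B : Matrix ι ι ℝ) (x : ι → ℝ) : ι → ℝ :=
  fun i => Real.exp (∑ j, B i j * Real.log (x j))

theorem scaledLog_expMulVecLog (B : Matrix ι ι ℝ) (c : ℝ) (x : ι → ℝ) :
    scaledLog c (expMulVecLog B x) = B *ᵥ scaledLog c x := by
  funext i
  simp only [scaledLog, expMulVecLog, Real.log_exp, mulVec, dotProduct, Finset.mul_sum]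
  exact Finset.sum_congr rfl fun j _ => by ring

end ConjugatedAction

section LogLimit

variable {n : ℕ}

theorem mem_logLimit_iff {V : Set (Fin n → ℝ)} {y : Fin n → ℝ} :
    y ∈ logLimit V ↔ ∃ (x : ℕ → Fin n → ℝ) (t : ℕ → ℝ),
      (∀ k, x k ∈ V) ∧ (∀ k, t k ∈ Set.Ioo (0 : ℝ) 1) ∧ Tendsto t atTop (𝓝 0) ∧
      Tendsto (fun k => scaledLog (-1 / Real.log (t k)) (x k)) atTop (𝓝 y) :=
  Iff.rfl

theorem mulVec_image_logLimit_subset (B : Matrix (Fin n) (Fin n) ℝ) (V : Set (Fin n → ℝ)) :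
    (B *ᵥ ·) '' logLimit V ⊆ logLimit (expMulVecLog B '' V) := by
  rintro _ ⟨y, hy, rfl⟩
  obtain ⟨x, t, hxV, ht, ht0, hlim⟩ := mem_logLimit_iff.mp hy
  refine mem_logLimit_iff.mpr ⟨fun k => expMulVecLog B (x k), t,
    fun k => Set.mem_image_of_mem _ (hxV k), ht, ht0, ?_⟩
  simp only [scaledLog_expMulVecLog]
  exact (continuous_const.matrix_mulVec continuous_id).tendsto y |>.comp hlim

theorem logLimit_expMulVecLog_image_subset {B : Matrix (Fin n) (Fin n) ℝ} (hB : IsUnit B.det)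
    (V : Set (Fin n → ℝ)) :
    logLimit (expMulVecLog B '' V) ⊆ (B *ᵥ ·) '' logLimit V := by
  intro y hy
  obtain ⟨x', t, hx', ht, ht0, hlim⟩ := mem_logLimit_iff.mp hy
  choose x hxV hx'_eq using hx'
  have hinv_left (v : Fin n → ℝ) : B⁻¹ *ᵥ (B *ᵥ v) = v := by
    rw [mulVec_mulVec, nonsing_inv_mul B hB, one_mulVec]
  have hinv_right (v : Fin n → ℝ) : B *ᵥ (B⁻¹ *ᵥ v) = v := by
    rw [mulVec_mulVec, mul_nonsing_inv B hB, one_mulVec]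
  have hpullback (k : ℕ) : scaledLog (-1 / Real.log (t k)) (x k) =
      B⁻¹ *ᵥ scaledLog (-1 / Real.log (t k)) (x' k) := by
    rw [← hx'_eq, scaledLog_expMulVecLog, hinv_left]
  refine ⟨B⁻¹ *ᵥ y, mem_logLimit_iff.mpr ⟨x, t, hxV, ht, ht0, ?_⟩, hinv_right y⟩
  simp only [hpullback]
  exact (continuous_const.matrix_mulVec continuous_id).tendsto y |>.comp hlim

end LogLimit

theorem stmt6_general {n : ℕ} (B : Matrix (Fin n) (Fin n) ℝ) (hB : IsUnit B.det)
    (V : Set (Fin n → ℝ)) :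
    (fun y : Fin n → ℝ => B.mulVec y) '' logLimit V =
      logLimit ((fun x : Fin n → ℝ =>
        fun i => Real.exp (∑ j, B i j * Real.log (x j))) '' V) :=
  (mulVec_image_logLimit_subset B V).antisymm (logLimit_expMulVecLog_image_subset hB V)

/-- for B in GL_n(ℝ), with the conjugated action Bbar = Exp ∘ B ∘ Log on
the positive orthant, one has B(A₀(V)) = A₀(Bbar(V)). -/
theorem stmt6 {n : ℕ} (B : Matrix (Fin n) (Fin n) ℝ) (hB : IsUnit B.det)
    (V : Set (Fin n → ℝ)) (hV : ∀ x ∈ V, ∀ i, 0 < x i) :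
    (fun y : Fin n → ℝ => B.mulVec y) '' logLimit V =
      logLimit ((fun x : Fin n → ℝ =>
        fun i => Real.exp (∑ j, B i j * Real.log (x j))) '' V) :=
  stmt6_general B hB V
end

section
/- For V ⊆ (ℝ_{>0})ⁿ, the point (0,…,0,−1) belongs to A₀(V) if and only if there exists a sequence y(k) in V such that yₙ(k) → 0 and for every N ∈ ℕ there exists k₀ such that for all k > k₀ and all i ∈ {1,…,n−1}: yₙ(k) < (y_i(k))^N and yₙ(k) < (y_i(k))^{−N}. -/
open Filter Topology

/-! In logarithmic coordinates the power condition on `y` says exactly that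
`log yᵢ = o(-log yₙ)` for `i < n`. Given such `y` with `yₙ → 0`, the scale `t = yₙ` exhibits
`(0,…,0,-1)` as a limit point; conversely, if `(-1/log t) • Log x → (0,…,0,-1)` then
`log xₙ ~ log t → -∞` and `log xᵢ = o(log t) = o(log xₙ)`. -/

open Real

lemma lt_rpow_and_lt_rpow_neg_iff {a b : ℝ} (ha : 0 < a) (hb : 0 < b) (z : ℝ) :
    b < a ^ z ∧ b < a ^ (-z) ↔ |z * log a| < -log b := by
  rw [lt_rpow_iff_log_lt hb ha, lt_rpow_iff_log_lt hb ha, abs_lt]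
  constructor <;> rintro ⟨h₁, h₂⟩ <;> constructor <;> linarith

lemma tendsto_div_nhds_zero_iff_forall_nat {α : Type*} {l : Filter α} {f g : α → ℝ}
    (hg : ∀ᶠ x in l, 0 < g x) :
    Tendsto (fun x => f x / g x) l (𝓝 0) ↔ ∀ N : ℕ, ∀ᶠ x in l, |N * f x| < g x := by
  simp_rw [NormedAddGroup.tendsto_nhds_zero, Real.norm_eq_abs, abs_mul, Nat.abs_cast]
  constructor
  · intro h N
    filter_upwards [hg, h (1 / (N + 1)) (by positivity)] with x hgx hx
    rw [abs_div, abs_of_pos hgx, div_lt_iff₀ hgx] at hx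
    calc N * |f x| ≤ (N + 1) * |f x| := by gcongr; linarith
      _ < (N + 1) * (1 / (N + 1) * g x) := by gcongr
      _ = g x := by field_simp
  · intro h ε hε
    obtain ⟨N, hN⟩ := exists_nat_gt ε⁻¹
    filter_upwards [hg, h N] with x hgx hx
    rw [abs_div, abs_of_pos hgx, div_lt_iff₀ hgx]
    have hεN : 1 < ε * N := by rwa [inv_lt_iff_one_lt_mul₀' hε] at hN
    nlinarith [abs_nonneg (f x)]

lemma eventually_atTop_iff_exists_forall_gt {α : Type*} [SemilatticeSup α] [Nonempty α]
    [NoMaxOrder α] {p : α → Prop} : (∀ᶠ k in atTop, p k) ↔ ∃ k₀, ∀ k > k₀, p k := by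
  simpa using (atTop_basis_Ioi (α := α)).eventually_iff

lemma forall_nat_lt_rpow_and_lt_rpow_neg_iff {ι : Type*} [Finite ι] {p : ι → Prop}
    {a : ℕ → ι → ℝ} {b : ℕ → ℝ} (ha : ∀ k i, 0 < a k i) (hb : ∀ k, 0 < b k)
    (hb0 : Tendsto b atTop (𝓝 0)) :
    (∀ N : ℕ, ∃ k₀, ∀ k > k₀, ∀ i, p i → b k < a k i ^ (N : ℝ) ∧ b k < a k i ^ (-(N : ℝ))) ↔
      ∀ i, p i → Tendsto (fun k => log (a k i) / -log (b k)) atTop (𝓝 0) := by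
  have hlog : ∀ᶠ k in atTop, 0 < -log (b k) := by
    filter_upwards [hb0.eventually_lt_const one_pos] with k hk
    exact neg_pos.2 (log_neg (hb k) hk)
  simp_rw [← eventually_atTop_iff_exists_forall_gt, eventually_all,
    tendsto_div_nhds_zero_iff_forall_nat hlog, lt_rpow_and_lt_rpow_neg_iff (ha _ _) (hb _)]
  exact forall_comm.trans (forall_congr' fun _ => forall_comm)

lemma mem_logLimit_of_tendsto_log_div {n : ℕ} {V : Set (Fin n → ℝ)} {y : ℕ → Fin n → ℝ}
    {j : Fin n} (hyV : ∀ k, y k ∈ V) (hy : ∀ k, 0 < y k j)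
    (hy0 : Tendsto (fun k => y k j) atTop (𝓝 0))
    (hlog : ∀ i, i ≠ j → Tendsto (fun k => log (y k i) / -log (y k j)) atTop (𝓝 0)) :
    (fun i => if i = j then (-1 : ℝ) else 0) ∈ logLimit V := by
  -- the scale `t = y j`, capped so that it lies in `(0, 1)`; eventually it is uncapped
  refine ⟨y, fun k => min (y k j) (1 / 2), hyV,
    fun k => ⟨lt_min (hy k) one_half_pos, (min_le_right _ _).trans_lt one_half_lt_one⟩,
    by simpa using hy0.min (tendsto_const_nhds (x := (1 / 2 : ℝ))), tendsto_pi_nhds.2 fun i => ?_⟩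
  have hsmall : ∀ᶠ k in atTop, y k j < 1 / 2 := hy0.eventually_lt_const one_half_pos
  have hmin : ∀ᶠ k in atTop, min (y k j) (1 / 2) = y k j :=
    hsmall.mono fun k hk => min_eq_left hk.le
  by_cases hij : i = j
  · subst hij
    simp only [if_true]
    refine tendsto_const_nhds.congr' ?_
    filter_upwards [hmin, hsmall] with k hk hk'
    have : log (y k i) ≠ 0 := (log_neg (hy k) (by linarith)).ne
    rw [hk]
    field_simp
  · simp only [hij, if_false]
    refine (hlog i hij).congr' ?_
    filter_upwards [hmin] with k hk
    rw [hk]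
    ring

lemma tendsto_log_div_of_mem_logLimit {n : ℕ} {V : Set (Fin n → ℝ)}
    (hV : ∀ x ∈ V, ∀ i, 0 < x i) {j : Fin n}
    (h : (fun i => if i = j then (-1 : ℝ) else 0) ∈ logLimit V) :
    ∃ y : ℕ → Fin n → ℝ, (∀ k, y k ∈ V) ∧ Tendsto (fun k => y k j) atTop (𝓝 0) ∧
      ∀ i, i ≠ j → Tendsto (fun k => log (y k i) / -log (y k j)) atTop (𝓝 0) := by
  obtain ⟨x, t, hxV, ht, ht0, hconv⟩ := h
  set u : ℕ → Fin n → ℝ := fun k i => -1 / log (t k) * log (x k i)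
  have hu : ∀ i, Tendsto (fun k => u k i) atTop (𝓝 (if i = j then -1 else 0)) :=
    tendsto_pi_nhds.1 hconv
  have huj : Tendsto (fun k => u k j) atTop (𝓝 (-1)) := by simpa using hu j
  refine ⟨x, hxV, ?_, fun i hij => ?_⟩
  · have hlogt : Tendsto (fun k => -log (t k)) atTop atTop :=
      tendsto_neg_atBot_atTop.comp <| tendsto_log_nhdsGT_zero.comp <|
        tendsto_nhdsWithin_iff.2 ⟨ht0, .of_forall fun k => (ht k).1⟩
    have hlogx : Tendsto (fun k => log (x k j)) atTop atBot := by
      refine (huj.neg_mul_atTop (by norm_num) hlogt).congr fun k => ?_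
      have : log (t k) ≠ 0 := (log_neg (ht k).1 (ht k).2).ne
      change -1 / log (t k) * log (x k j) * -log (t k) = log (x k j)
      field_simp
    exact (tendsto_exp_atBot.comp hlogx).congr fun k => exp_log (hV _ (hxV k) j)
  · have hui : Tendsto (fun k => u k i) atTop (𝓝 0) := by simpa [hij] using hu i
    have hquot := hui.div huj.neg (by norm_num)
    rw [zero_div] at hquot
    refine hquot.congr fun k => ?_
    change u k i / -u k j = _
    have : -1 / log (t k) ≠ 0 := div_ne_zero (by norm_num) (log_neg (ht k).1 (ht k).2).ne
    rw [show -u k j = -1 / log (t k) * -log (x k j) by ring, mul_div_mul_left _ _ this]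

/-- the point (0,…,0,−1) lies in A₀(V) iff V contains a sequence whose last
coordinate tends to 0 and is eventually smaller than every fixed positive or negative
power of each of the other coordinates. -/
theorem stmt7 {n : ℕ} (V : Set (Fin (n + 1) → ℝ)) (hV : ∀ x ∈ V, ∀ i, 0 < x i) :
    (fun i : Fin (n + 1) => if i = Fin.last n then (-1 : ℝ) else 0) ∈ logLimit V ↔
      ∃ y : ℕ → Fin (n + 1) → ℝ, (∀ k, y k ∈ V) ∧
        Tendsto (fun k => y k (Fin.last n)) atTop (𝓝 0) ∧
        ∀ N : ℕ, ∃ k₀, ∀ k > k₀, ∀ i : Fin (n + 1), i ≠ Fin.last n →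
          y k (Fin.last n) < (y k i) ^ (N : ℝ) ∧
          y k (Fin.last n) < (y k i) ^ (-(N : ℝ)) := by
  constructor
  · intro h
    obtain ⟨y, hyV, hy0, hlog⟩ := tendsto_log_div_of_mem_logLimit hV h
    exact ⟨y, hyV, hy0, (forall_nat_lt_rpow_and_lt_rpow_neg_iff
      (fun k => hV _ (hyV k)) (fun k => hV _ (hyV k) _) hy0).2 hlog⟩
  · rintro ⟨y, hyV, hy0, hpow⟩
    have hy : ∀ k i, 0 < y k i := fun k => hV _ (hyV k)
    exact mem_logLimit_of_tendsto_log_div hyV (hy · _) hy0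
      ((forall_nat_lt_rpow_and_lt_rpow_neg_iff hy (hy · _) hy0).1 hpow)
end

section
/- The converse of the previous implication fails: for V = {(x,y) ∈ (ℝ_{>0})² : y = e^{−1/x²}}, the point (0,−1) belongs to A₀(V), but there is no sequence in V converging to a point (a,0) with a > 0. -/
/-!
With `t = e^{-1/u²}`, the point `(u, e^{-1/u²})` of the curve has rescaled logarithm
`(u² log u, -1)`, which tends to `(0, -1)` as `u → 0⁺`. On the other hand `e^{-1/u²}` is
continuous and positive at every `a ≠ 0`, so a limit `(a, b)` of points of the curve with
`a ≠ 0` has `b = e^{-1/a²} ≠ 0`.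
-/

open Filter Topology

open Real

def expCurve : Set (Fin 2 → ℝ) := {p | 0 < p 0 ∧ p 1 = exp (-(1 / (p 0) ^ 2))}

lemma exp_neg_one_div_sq_mem_Ioo {u : ℝ} (hu : u ≠ 0) :
    exp (-(1 / u ^ 2)) ∈ Set.Ioo 0 1 :=
  ⟨exp_pos _, exp_lt_one_iff.2 (by simpa using pow_pos (sq_pos_of_ne_zero hu) 1)⟩

lemma neg_one_div_log_exp_neg_one_div_sq {u : ℝ} (hu : u ≠ 0) :
    -1 / log (exp (-(1 / u ^ 2))) = u ^ 2 := by
  rw [log_exp]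
  field_simp

lemma tendsto_exp_neg_one_div_sq_nhdsGT_zero :
    Tendsto (fun u : ℝ => exp (-(1 / u ^ 2))) (𝓝[>] 0) (𝓝 0) := by
  have : Tendsto (fun u : ℝ => 1 / u ^ 2) (𝓝[>] 0) atTop := by
    simpa [Function.comp_def, inv_pow] using
      (tendsto_pow_atTop two_ne_zero).comp (tendsto_inv_nhdsGT_zero (𝕜 := ℝ))
  exact tendsto_exp_atBot.comp (tendsto_neg_atTop_atBot.comp this)

lemma tendsto_sq_mul_log_nhdsGT_zero :
    Tendsto (fun u : ℝ => u ^ 2 * log u) (𝓝[>] 0) (𝓝 0) := by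
  simpa [mul_comm] using tendsto_log_mul_rpow_nhdsGT_zero two_pos

lemma eq_of_tendsto_of_mem_graph {ι : Type*} {l : Filter ι} [l.NeBot] {f : ℝ → ℝ} {a b : ℝ}
    (hf : ContinuousAt f a) {x : ι → Fin 2 → ℝ} (hx : ∀ k, x k 1 = f (x k 0))
    (hlim : Tendsto x l (𝓝 ![a, b])) : b = f a := by
  have h0 : Tendsto (fun k => x k 0) l (𝓝 a) := tendsto_pi_nhds.1 hlim 0
  have h1 : Tendsto (fun k => x k 1) l (𝓝 b) := tendsto_pi_nhds.1 hlim 1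
  exact tendsto_nhds_unique h1 ((hf.tendsto.comp h0).congr fun k => (hx k).symm)

lemma tendsto_one_div_add_one_nhdsGT_zero :
    Tendsto (fun k : ℕ => 1 / ((k : ℝ) + 1)) atTop (𝓝[>] 0) :=
  tendsto_nhdsWithin_iff.2 ⟨tendsto_one_div_add_atTop_nhds_zero_nat,
    Eventually.of_forall fun _ => Set.mem_Ioi.2 Nat.one_div_pos_of_nat⟩

lemma zero_neg_one_mem_logLimit_expCurve : ![(0 : ℝ), -1] ∈ logLimit expCurve := by
  set u : ℕ → ℝ := fun k => 1 / ((k : ℝ) + 1)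
  have hu : Tendsto u atTop (𝓝[>] 0) := tendsto_one_div_add_one_nhdsGT_zero
  have hu_ne : ∀ k, u k ≠ 0 := fun k => Nat.one_div_pos_of_nat.ne'
  refine ⟨fun k => ![u k, exp (-(1 / u k ^ 2))], fun k => exp (-(1 / u k ^ 2)),
    fun k => ⟨Nat.one_div_pos_of_nat, rfl⟩, fun k => exp_neg_one_div_sq_mem_Ioo (hu_ne k),
    tendsto_exp_neg_one_div_sq_nhdsGT_zero.comp hu,
    tendsto_pi_nhds.2 (Fin.forall_fin_two.2 ⟨?_, ?_⟩)⟩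
  · simp only [Matrix.cons_val_zero, neg_one_div_log_exp_neg_one_div_sq (hu_ne _)]
    exact tendsto_sq_mul_log_nhdsGT_zero.comp hu
  · refine tendsto_const_nhds.congr fun k => ?_
    simp only [Matrix.cons_val_one, Matrix.cons_val_zero, log_exp]
    field_simp [hu_ne k]

lemma not_tendsto_of_mem_expCurve {ι : Type*} {l : Filter ι} [l.NeBot] {x : ι → Fin 2 → ℝ}
    (hx : ∀ k, x k ∈ expCurve) {a : ℝ} (ha : a ≠ 0) : ¬Tendsto x l (𝓝 ![a, 0]) := fun hlim =>
  have hcont : ContinuousAt (fun u : ℝ => exp (-(1 / u ^ 2))) a := by fun_prop (disch := simpa)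
  (exp_pos _).ne (eq_of_tendsto_of_mem_graph (f := fun u => exp (-(1 / u ^ 2))) hcont
    (fun k => (hx k).2) hlim)

/-- for V = {(x, e^{-1/x²}) : x > 0}, the point (0,−1) lies in A₀(V) but no
sequence in V converges to a point (a, 0) with a > 0. -/
theorem stmt9 :
    (![(0 : ℝ), -1] ∈ logLimit
        {p : Fin 2 → ℝ | 0 < p 0 ∧ p 1 = Real.exp (-(1 / (p 0) ^ 2))}) ∧
    ¬ ∃ (x : ℕ → Fin 2 → ℝ) (a : ℝ), 0 < a ∧
        (∀ k, x k ∈ {p : Fin 2 → ℝ | 0 < p 0 ∧ p 1 = Real.exp (-(1 / (p 0) ^ 2))}) ∧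
        Tendsto x atTop (𝓝 ![a, 0]) := by
  refine ⟨zero_neg_one_mem_logLimit_expCurve, ?_⟩
  rintro ⟨x, a, ha, hx, hlim⟩
  exact not_tendsto_of_mem_expCurve hx ha.ne' hlim
end

section
/- The logarithmic limit set of an exponential basic cone is the corresponding basic cone: for N = (N₁,…,N_{n−1}) ∈ ℕ^{n−1} and h ∈ (0,1], setting E_{N,h} = {x ∈ (ℝ_{>0})ⁿ : ∀i, 0 < x_i ≤ h, and ∀ i < n, x_{i+1} ≤ x_i^{N_i}}, one has A₀(E_{N,h}) = B_N, where B_N = {x ∈ ℝⁿ : ∀i, x_i ≤ 0, and ∀ i < n, x_{i+1} ≤ N_i x_i}. -/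
open Filter Topology

/-!
In logarithmic coordinates `z = Log x` the set `E_{N,h}` is the polyhedron
`P = {z | z ≤ log h, z_{i+1} ≤ N_i z_i}`, whose recession cone is `B_N`. The scaling
factor `-1 / log t` tends to `0`, so it kills the constant `log h` and a logarithmic limit
satisfies the homogeneous inequalities defining `B_N`. Conversely, for `u ∈ P` and `y ∈ B_N`
the ray `u + s y` stays in `P`, and rescaling it with `t = e^{-s}` recovers `y`.
-/

open Real

def expBasicCone {n : ℕ} (N : Fin n → ℕ) (h : ℝ) : Set (Fin (n + 1) → ℝ) :=
  {x | (∀ i, 0 < x i ∧ x i ≤ h) ∧ ∀ i : Fin n, x i.succ ≤ (x i.castSucc) ^ (N i : ℝ)}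

def basicCone {n : ℕ} (N : Fin n → ℕ) : Set (Fin (n + 1) → ℝ) :=
  {x | (∀ i, x i ≤ 0) ∧ ∀ i : Fin n, x i.succ ≤ (N i : ℝ) * x i.castSucc}

lemma tendsto_neg_one_div_log_nhds_zero {α : Type*} {l : Filter α} {t : α → ℝ}
    (ht : Tendsto t l (𝓝[>] 0)) : Tendsto (fun k => -1 / log (t k)) l (𝓝 0) := by
  have hinv := (tendsto_inv_atBot_zero.comp (tendsto_log_nhdsGT_zero.comp ht)).neg
  rw [neg_zero] at hinv
  exact hinv.congr fun k => by simp [div_eq_mul_inv]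

lemma map_nonpos_of_mem_logLimit {n : ℕ} {V : Set (Fin n → ℝ)}
    (ℓ : (Fin n → ℝ) →L[ℝ] ℝ) (c : ℝ) (hV : ∀ x ∈ V, ℓ (fun i => log (x i)) ≤ c)
    {y : Fin n → ℝ} (hy : y ∈ logLimit V) : ℓ y ≤ 0 := by
  obtain ⟨x, t, hxV, ht01, ht0, hlim⟩ := hy
  set a : ℕ → ℝ := fun k => -1 / log (t k)
  have ha_nonneg : ∀ k, 0 ≤ a k := fun k =>
    (div_pos_of_neg_of_neg neg_one_lt_zero (log_neg (ht01 k).1 (ht01 k).2)).le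
  have ha : Tendsto a atTop (𝓝 0) := tendsto_neg_one_div_log_nhds_zero
    (tendsto_nhdsWithin_iff.mpr ⟨ht0, Eventually.of_forall fun k => (ht01 k).1⟩)
  have hbound : ∀ k, ℓ (a k • fun i => log (x k i)) ≤ a k * c := fun k => by
    rw [ℓ.map_smul, smul_eq_mul]
    exact mul_le_mul_of_nonneg_left (hV _ (hxV k)) (ha_nonneg k)
  have hc : Tendsto (fun k => a k * c) atTop (𝓝 0) := by simpa using ha.mul_const c
  exact le_of_tendsto_of_tendsto' ((ℓ.continuous.tendsto y).comp hlim) hc hbound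

lemma mem_logLimit_of_forall_exp_mem {n : ℕ} {V : Set (Fin n → ℝ)} (u y : Fin n → ℝ)
    (hV : ∀ s : ℝ, 1 ≤ s → (fun i => exp (u i + s * y i)) ∈ V) : y ∈ logLimit V := by
  refine ⟨fun k i => exp (u i + ((k : ℝ) + 1) * y i), fun k => exp (-((k : ℝ) + 1)),
    fun k => hV _ (by simp),
    fun k => ⟨exp_pos _, exp_lt_one_iff.mpr (neg_neg_of_pos (by positivity))⟩, ?_, ?_⟩
  · refine tendsto_exp_atBot.comp (tendsto_neg_atTop_atBot.comp ?_)
    exact tendsto_atTop_add_const_right _ 1 tendsto_natCast_atTop_atTop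
  · refine tendsto_pi_nhds.mpr fun i => ?_
    have hlim : Tendsto (fun k : ℕ => 1 / ((k : ℝ) + 1) * u i + y i) atTop (𝓝 (y i)) := by
      simpa using (tendsto_one_div_add_atTop_nhds_zero_nat.mul_const (u i)).add_const (y i)
    refine hlim.congr fun k => ?_
    have hk : (k : ℝ) + 1 ≠ 0 := by positivity
    simp only [log_exp]
    field_simp

lemma basicCone_add_smul_mem {n : ℕ} {N : Fin n → ℕ} {u y : Fin (n + 1) → ℝ}
    (hu : u ∈ basicCone N) (hy : y ∈ basicCone N) {s : ℝ} (hs : 0 ≤ s) :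
    u + s • y ∈ basicCone N := by
  refine ⟨fun i => ?_, fun i => ?_⟩
  · simpa using add_nonpos (hu.1 i) (mul_nonpos_of_nonneg_of_nonpos hs (hy.1 i))
  · have := mul_le_mul_of_nonneg_left (hy.2 i) hs
    simp only [Pi.add_apply, Pi.smul_apply, smul_eq_mul]
    linarith [hu.2 i]

-- The witness is `z_i = M^i min(L, 0)` with `M = 1 + ∑ N_i`, which dominates every `N_i`.
lemma exists_mem_basicCone_forall_le {n : ℕ} (N : Fin n → ℕ) (L : ℝ) :
    ∃ z ∈ basicCone N, ∀ i, z i ≤ L := by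
  set M : ℕ := 1 + ∑ j, N j
  have hM : 1 ≤ M := Nat.le_add_right 1 _
  have hNM : ∀ j, N j ≤ M := fun j =>
    (Finset.single_le_sum (fun _ _ => Nat.zero_le _) (Finset.mem_univ j)).trans
      (Nat.le_add_left _ 1)
  have hmin : min L 0 ≤ 0 := min_le_right L 0
  refine ⟨fun i => (M : ℝ) ^ (i : ℕ) * min L 0, ⟨fun i => ?_, fun i => ?_⟩, fun i => ?_⟩
  · exact mul_nonpos_of_nonneg_of_nonpos (by positivity) hmin
  · have hpow : (N i : ℝ) * (M : ℝ) ^ (i : ℕ) ≤ (M : ℝ) ^ ((i : ℕ) + 1) := by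
      rw [pow_succ']
      exact mul_le_mul_of_nonneg_right (by exact_mod_cast hNM i) (by positivity)
    simp only [Fin.val_succ, Fin.val_castSucc]
    nlinarith [mul_le_mul_of_nonpos_right hpow hmin]
  · have hone : (1 : ℝ) ≤ (M : ℝ) ^ (i : ℕ) := one_le_pow₀ (by exact_mod_cast hM)
    nlinarith [min_le_left L 0]

lemma exp_mem_expBasicCone {n : ℕ} {N : Fin n → ℕ} {h : ℝ} (hh : 0 < h)
    {z : Fin (n + 1) → ℝ} (hz : ∀ i, z i ≤ log h)
    (hzN : ∀ i : Fin n, z i.succ ≤ (N i : ℝ) * z i.castSucc) :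
    (fun i => exp (z i)) ∈ expBasicCone N h := by
  refine ⟨fun i => ⟨exp_pos _, ?_⟩, fun i => ?_⟩
  · exact (exp_le_exp.mpr (hz i)).trans_eq (exp_log hh)
  · rw [← exp_mul, mul_comm]
    exact exp_le_exp.mpr (hzN i)

lemma logLimit_expBasicCone_subset {n : ℕ} (N : Fin n → ℕ) (h : ℝ) :
    logLimit (expBasicCone N h) ⊆ basicCone N := by
  intro y hy
  refine ⟨fun i => ?_, fun i => ?_⟩
  · refine map_nonpos_of_mem_logLimit (ContinuousLinearMap.proj i) (log h) ?_ hy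
    exact fun x hx => log_le_log (hx.1 i).1 (hx.1 i).2
  · rw [← sub_nonpos]
    refine map_nonpos_of_mem_logLimit (ContinuousLinearMap.proj i.succ -
      (N i : ℝ) • ContinuousLinearMap.proj i.castSucc) 0 (fun x hx => ?_) hy
    have hlog := log_le_log (hx.1 i.succ).1 (hx.2 i)
    rw [log_rpow (hx.1 i.castSucc).1] at hlog
    simpa using hlog

lemma basicCone_subset_logLimit_expBasicCone {n : ℕ} (N : Fin n → ℕ) {h : ℝ} (hh : 0 < h) :
    basicCone N ⊆ logLimit (expBasicCone N h) := by
  intro y hy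
  obtain ⟨u, hu, hule⟩ := exists_mem_basicCone_forall_le N (log h)
  refine mem_logLimit_of_forall_exp_mem u y fun s hs => ?_
  have hsy := basicCone_add_smul_mem hu hy (zero_le_one.trans hs)
  refine exp_mem_expBasicCone hh (fun i => ?_) hsy.2
  have := mul_nonpos_of_nonneg_of_nonpos (zero_le_one.trans hs) (hy.1 i)
  linarith [hule i]

/-- the logarithmic limit set of the exponential basic cone E_{N,h} is the
basic cone B_N. -/
theorem stmt10 {n : ℕ} (N : Fin n → ℕ) (h : ℝ) (hh : h ∈ Set.Ioc (0 : ℝ) 1) :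
    logLimit {x : Fin (n + 1) → ℝ | (∀ i, 0 < x i ∧ x i ≤ h) ∧
        ∀ i : Fin n, x i.succ ≤ (x i.castSucc) ^ (N i : ℝ)} =
      {x : Fin (n + 1) → ℝ | (∀ i, x i ≤ 0) ∧
        ∀ i : Fin n, x i.succ ≤ (N i : ℝ) * x i.castSucc} :=
  (logLimit_expBasicCone_subset N h).antisymm (basicCone_subset_logLimit_expBasicCone N hh.1)
end

section
/- Given any sequence a(k) in (ℝ_{>0})ⁿ converging to a = (a₁,…,a_h,0,…,0) with h < n and a₁,…,a_h > 0, there exist a subsequence of a(k) and a linear map A ∈ GL_n(ℝ) such that the sequence b(k) = Ā(a(k)) is in standard position in dimension m for some m with n − m ≥ h, i.e. b(k) converges to a point (b₁,…,b_g,0,…,0) with g = n − m and b₁,…,b_g > 0, and for every N ∈ ℕ eventually b_{i+1}(k) < (b_i(k))^N for all i ∈ {g+1,…,n−1}. -/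
open Filter Topology Asymptotics Module

/-!
Pass to logarithms `t = log a`. The first `h` coordinates of `t` converge and the remaining block
`t'` tends to `-∞` coordinatewise, so it suffices to bring `t'` into (logarithmic) standard
position by a linear change of coordinates, leaving the first block alone.

This goes by induction on the dimension. Along a subsequence either `t'` converges, or `‖t'‖ → ∞`
and `t' / ‖t'‖` converges to a unit vector `d`. In the second case split the space as `ker f × ℝ`
with `f d = -1`: the `ℝ`-component `f t'` tends to `-∞` and dominates the `ker f`-component, which
is `o(‖t'‖)`. Normalizing the latter by induction and appending `f t'` as the last coordinate gives
standard position. Exponentiating turns `u i = o(u (i + 1))` into `b (i + 1) < b i ^ N` eventually.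
-/

/-- `u` is the coordinatewise logarithm of a sequence in standard position in dimension `m - q`;
the paper's condition `b (i + 1) < b i ^ N` becomes `u i = o(u (i + 1))`. -/
structure IsLogStandardPosition {m : ℕ} (u : ℕ → Fin m → ℝ) (q : ℕ) : Prop where
  tendsto_nhds : ∀ i : Fin m, (i : ℕ) < q → ∃ L, Tendsto (fun k => u k i) atTop (𝓝 L)
  tendsto_atBot : ∀ i : Fin m, q ≤ (i : ℕ) → Tendsto (fun k => u k i) atTop atBot
  isLittleO_succ : ∀ i j : Fin m, (j : ℕ) = i + 1 → q ≤ (i : ℕ) →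
    (fun k => u k i) =o[atTop] (fun k => u k j)

namespace IsLogStandardPosition

variable {m q : ℕ} {u : ℕ → Fin m → ℝ}

theorem of_tendsto {L : Fin m → ℝ} (hu : Tendsto u atTop (𝓝 L)) : IsLogStandardPosition u m where
  tendsto_nhds i _ := ⟨L i, tendsto_pi_nhds.1 hu i⟩
  tendsto_atBot i hi := absurd i.isLt (by omega)
  isLittleO_succ i _ _ hi := absurd i.isLt (by omega)

theorem snoc (hu : IsLogStandardPosition u q) (hqm : q ≤ m) {s : ℕ → ℝ}
    (hs : Tendsto s atTop atBot) (hus : ∀ j, (fun k => u k j) =o[atTop] s) :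
    IsLogStandardPosition (fun k => (Fin.snoc (u k) (s k) : Fin (m + 1) → ℝ)) q where
  tendsto_nhds i hi := by
    induction i using Fin.lastCases with
    | last => rw [Fin.val_last] at hi; omega
    | cast i => simpa using hu.tendsto_nhds i (by simpa using hi)
  tendsto_atBot i hi := by
    induction i using Fin.lastCases with
    | last => simpa using hs
    | cast i => simpa using hu.tendsto_atBot i (by simpa using hi)
  isLittleO_succ i j hij hi := by
    induction i using Fin.lastCases with
    | last => rw [Fin.val_last] at hij; omega
    | cast i =>
      induction j using Fin.lastCases with
      | last => simpa using hus i
      | cast j => simpa using hu.isLittleO_succ i j (by simpa using hij) (by simpa using hi)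

theorem append {h : ℕ} {x : ℕ → Fin h → ℝ}
    (hx : ∀ i, ∃ L, Tendsto (fun k => x k i) atTop (𝓝 L)) (hu : IsLogStandardPosition u q) :
    IsLogStandardPosition (fun k => Fin.append (x k) (u k)) (h + q) where
  tendsto_nhds i hi := by
    induction i using Fin.addCases with
    | left i => simpa using hx i
    | right i => simpa using hu.tendsto_nhds i (by simpa using hi)
  tendsto_atBot i hi := by
    induction i using Fin.addCases with
    | left i => rw [Fin.val_castAdd] at hi; omega
    | right i => simpa using hu.tendsto_atBot i (by simpa using hi)
  isLittleO_succ i j hij hi := by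
    induction i using Fin.addCases with
    | left i => rw [Fin.val_castAdd] at hi; omega
    | right i =>
      induction j using Fin.addCases with
      | left j => rw [Fin.val_castAdd, Fin.val_natAdd] at hij; omega
      | right j =>
        rw [Fin.val_natAdd, Fin.val_natAdd] at hij
        simpa using hu.isLittleO_succ i j (by omega) (by simpa using hi)

theorem lt_of_tendsto_norm_atTop {V : Type*} [NormedAddCommGroup V] [NormedSpace ℝ V]
    {v : ℕ → V} (E : V ≃ₗ[ℝ] (Fin m → ℝ)) (hu : IsLogStandardPosition (fun k => E (v k)) q)
    (hv : Tendsto (fun k => ‖v k‖) atTop atTop) : q < m := by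
  by_contra! hqm
  choose L hL using fun i : Fin m => hu.tendsto_nhds i (by omega)
  have hEv : Tendsto (fun k => E (v k)) atTop (𝓝 L) := tendsto_pi_nhds.2 hL
  have : Tendsto v atTop (𝓝 (E.symm L)) := by
    simpa [Function.comp_def] using
      ((LinearMap.continuous_of_finiteDimensional E.symm.toLinearMap).tendsto L).comp hEv
  exact not_tendsto_atTop_of_tendsto_nhds this.norm hv

theorem eventually_lt_mul (hu : IsLogStandardPosition u q) (M : ℝ) :
    ∀ᶠ k in atTop, ∀ i j : Fin m, (j : ℕ) = i + 1 → q ≤ (i : ℕ) → u k j < M * u k i := by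
  simp only [eventually_all]
  intro i j hij hi
  have hneg := (hu.tendsto_atBot j (by omega)).eventually (eventually_lt_atBot 0)
  have hsmall := ((hu.isLittleO_succ i j hij hi).const_mul_left M).bound one_half_pos
  filter_upwards [hneg, hsmall] with k hk hk'
  rw [Real.norm_eq_abs, Real.norm_eq_abs, abs_of_neg hk] at hk'
  linarith [neg_abs_le (M * u k i)]

theorem eventually_exp_lt_exp_rpow (hu : IsLogStandardPosition u q) (M : ℝ) :
    ∀ᶠ k in atTop, ∀ i j : Fin m, (j : ℕ) = i + 1 → q ≤ (i : ℕ) →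
      Real.exp (u k j) < Real.exp (u k i) ^ M := by
  filter_upwards [hu.eventually_lt_mul M] with k hk i j hij hi
  rw [← Real.exp_mul, Real.exp_lt_exp, mul_comm]
  exact hk i j hij hi

theorem exists_tendsto_exp (hu : IsLogStandardPosition u q) :
    ∃ bl : Fin m → ℝ, (∀ i : Fin m, (i : ℕ) < q → 0 < bl i) ∧
      (∀ i : Fin m, q ≤ (i : ℕ) → bl i = 0) ∧
      Tendsto (fun k i => Real.exp (u k i)) atTop (𝓝 bl) := by
  have : ∀ i : Fin m, ∃ b, ((i : ℕ) < q → 0 < b) ∧ (q ≤ (i : ℕ) → b = 0) ∧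
      Tendsto (fun k => Real.exp (u k i)) atTop (𝓝 b) := by
    intro i
    by_cases hi : (i : ℕ) < q
    · obtain ⟨L, hL⟩ := hu.tendsto_nhds i hi
      exact ⟨Real.exp L, fun _ => Real.exp_pos L, by omega, (Real.continuous_exp.tendsto L).comp hL⟩
    · exact ⟨0, by omega, fun _ => rfl,
        Real.tendsto_exp_atBot.comp (hu.tendsto_atBot i (by omega))⟩
  choose bl hpos hzero hlim using this
  exact ⟨bl, hpos, hzero, tendsto_pi_nhds.2 hlim⟩

end IsLogStandardPosition

section

variable (R M : Type*) [Semiring R] [AddCommMonoid M] [Module R M]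

def Fin.appendLinearEquiv (m n : ℕ) : ((Fin m → M) × (Fin n → M)) ≃ₗ[R] (Fin (m + n) → M) where
  __ := Fin.appendEquiv m n
  map_add' x y := by
    ext i
    induction i using Fin.addCases <;> simp
  map_smul' c x := by
    ext i
    induction i using Fin.addCases <;> simp

def Fin.snocLinearEquiv (m : ℕ) : ((Fin m → M) × M) ≃ₗ[R] (Fin (m + 1) → M) where
  toFun x := Fin.snoc x.1 x.2
  invFun f := (Fin.init f, f (Fin.last m))
  left_inv x := by simp
  right_inv f := by simp
  map_add' x y := by
    ext i
    induction i using Fin.lastCases <;> simp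
  map_smul' c x := by
    ext i
    induction i using Fin.lastCases <;> simp

end

namespace LinearMap

variable {R V : Type*} [Ring R] [AddCommGroup V] [Module R V]

def equivKerProd (f : V →ₗ[R] R) {c : V} (hc : f c = 1) : V ≃ₗ[R] (ker f × R) where
  toFun x := (⟨x - f x • c, by simp [hc]⟩, f x)
  invFun p := p.1 + p.2 • c
  left_inv x := by simp
  right_inv p := by
    obtain ⟨⟨w, hw⟩, t⟩ := p
    rw [mem_ker] at hw
    ext <;> simp [hw, hc]
  map_add' x y := by
    ext
    · simp only [map_add, add_smul, Submodule.coe_add, Prod.fst_add]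
      abel
    · simp
  map_smul' r x := by ext <;> simp [smul_sub, mul_smul]

end LinearMap

section

variable {V : Type*} [NormedAddCommGroup V] [NormedSpace ℝ V] [FiniteDimensional ℝ V]

theorem exists_subseq_tendsto_or_tendsto_norm_atTop (v : ℕ → V) :
    (∃ φ : ℕ → ℕ, StrictMono φ ∧ ∃ x, Tendsto (v ∘ φ) atTop (𝓝 x)) ∨
      Tendsto (fun k => ‖v k‖) atTop atTop := by
  by_cases hv : Tendsto (fun k => ‖v k‖) atTop atTop
  · exact Or.inr hv
  · simp only [tendsto_atTop, not_forall, not_eventually, not_le] at hv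
    obtain ⟨C, hC⟩ := hv
    obtain ⟨x, -, φ, hφ, hx⟩ :=
      tendsto_subseq_of_frequently_bounded (Metric.isBounded_ball (x := (0 : V)) (r := C))
        (by simpa using hC)
    exact Or.inl ⟨φ, hφ, x, hx⟩

theorem exists_subseq_tendsto_inv_norm_smul {v : ℕ → V}
    (hv : Tendsto (fun k => ‖v k‖) atTop atTop) :
    ∃ φ : ℕ → ℕ, StrictMono φ ∧ ∃ d : V, ‖d‖ = 1 ∧
      Tendsto (fun k => ‖v (φ k)‖⁻¹ • v (φ k)) atTop (𝓝 d) := by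
  have hsphere : ∃ᶠ k in atTop, ‖v k‖⁻¹ • v k ∈ Metric.sphere (0 : V) 1 := by
    refine (hv.eventually_ne_atTop 0).frequently.mono fun k hk => ?_
    simp [norm_smul, hk]
  obtain ⟨d, hd, φ, hφ, hlim⟩ :=
    tendsto_subseq_of_frequently_bounded Metric.isBounded_sphere hsphere
  rw [Metric.isClosed_sphere.closure_eq, mem_sphere_zero_iff_norm] at hd
  exact ⟨φ, hφ, d, hd, hlim⟩

theorem exists_subseq_equivProd_tendsto_atBot_isLittleO {v : ℕ → V}
    (hv : Tendsto (fun k => ‖v k‖) atTop atTop) :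
    ∃ φ : ℕ → ℕ, StrictMono φ ∧ ∃ (W : Submodule ℝ V) (e : V ≃ₗ[ℝ] W × ℝ),
      Tendsto (fun k => (e (v (φ k))).2) atTop atBot ∧
      (fun k => (e (v (φ k))).1) =o[atTop] (fun k => (e (v (φ k))).2) := by
  obtain ⟨φ, hφ, d, hd, hlim⟩ := exists_subseq_tendsto_inv_norm_smul hv
  obtain ⟨g, -, hgd⟩ := exists_dual_vector ℝ d (by simp [hd])
  have hfc : (-g.toLinearMap) (-d) = 1 := by simp [hgd, hd]
  set e := (-g.toLinearMap).equivKerProd hfc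
  have hed : e d = (0, -1) := by
    ext <;> simp [e, LinearMap.equivKerProd, hgd, hd]
  set N := fun k => ‖v (φ k)‖
  set δ := fun k => (N k)⁻¹ • v (φ k)
  have he : Tendsto (fun k => e (δ k)) atTop (𝓝 (0, -1)) :=
    hed ▸ ((LinearMap.continuous_of_finiteDimensional e.toLinearMap).tendsto d).comp hlim
  have hN : Tendsto N atTop atTop := hv.comp hφ.tendsto_atTop
  have hscale : ∀ᶠ k in atTop, e (v (φ k)) = N k • e (δ k) := by
    filter_upwards [hN.eventually_ne_atTop 0] with k hk
    rw [map_smul, smul_smul, mul_inv_cancel₀ hk, one_smul]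
  have hsnd : Tendsto (fun k => (e (δ k)).2) atTop (𝓝 (-1)) := he.snd_nhds
  refine ⟨φ, hφ, _, e, ?_, ?_⟩
  · have : Tendsto (fun k => N k * -(e (δ k)).2) atTop atTop :=
      hN.atTop_mul_pos one_pos (by simpa using hsnd.neg)
    refine (tendsto_neg_atTop_atBot.comp this).congr' ?_
    filter_upwards [hscale] with k hk
    simp [hk]
  · have hfst : (fun k => (e (δ k)).1) =o[atTop] (fun _ => (1 : ℝ)) :=
      (isLittleO_one_iff ℝ).2 he.fst_nhds
    have hone : (fun _ => (1 : ℝ)) =O[atTop] (fun k => (e (δ k)).2) :=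
      (isTheta_of_div_tendsto_nhds_ne_zero (by simpa using hsnd) (by norm_num)).1
    refine ((isBigO_refl N atTop).smul_isLittleO (hfst.trans_isBigO hone)).congr' ?_ ?_
    · filter_upwards [hscale] with k hk
      simp [hk]
    · filter_upwards [hscale] with k hk
      simp [hk]

theorem exists_isLogStandardPosition_of_tendsto {m : ℕ} (hV : finrank ℝ V = m) {v : ℕ → V}
    {x : V} (hv : Tendsto v atTop (𝓝 x)) :
    ∃ E : V ≃ₗ[ℝ] (Fin m → ℝ), IsLogStandardPosition (fun k => E (v k)) m := by
  let E := LinearEquiv.ofFinrankEq V (Fin m → ℝ) (hV.trans (finrank_fin_fun ℝ).symm)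
  exact ⟨E, .of_tendsto
    (((LinearMap.continuous_of_finiteDimensional E.toLinearMap).tendsto x).comp hv)⟩

theorem exists_subseq_isLogStandardPosition {m : ℕ} (hV : finrank ℝ V = m) (v : ℕ → V) :
    ∃ φ : ℕ → ℕ, StrictMono φ ∧ ∃ (E : V ≃ₗ[ℝ] (Fin m → ℝ)) (q : ℕ), q ≤ m ∧
      IsLogStandardPosition (fun k => E (v (φ k))) q := by
  induction m generalizing V with
  | zero =>
    have hv : Tendsto v atTop (𝓝 0) :=
      tendsto_const_nhds.congr fun k => ((finrank_zero_iff_forall_zero.1 hV) (v k)).symm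
    obtain ⟨E, hE⟩ := exists_isLogStandardPosition_of_tendsto hV hv
    exact ⟨id, strictMono_id, E, 0, le_rfl, hE⟩
  | succ m ih =>
    rcases exists_subseq_tendsto_or_tendsto_norm_atTop v with ⟨φ, hφ, x, hx⟩ | hv
    · obtain ⟨E, hE⟩ := exists_isLogStandardPosition_of_tendsto hV hx
      exact ⟨φ, hφ, E, m + 1, le_rfl, hE⟩
    obtain ⟨φ₁, hφ₁, W, e, hs, hw⟩ := exists_subseq_equivProd_tendsto_atBot_isLittleO hv
    have hW : finrank ℝ W = m := by
      have := e.finrank_eq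
      rw [finrank_prod, finrank_self, hV] at this
      omega
    obtain ⟨φ₂, hφ₂, E, q, hqm, hq⟩ := ih hW fun k => (e (v (φ₁ k))).1
    have hcoord : ∀ j, (fun k => E (e (v (φ₁ (φ₂ k)))).1 j) =O[atTop]
        (fun k => (e (v (φ₁ (φ₂ k)))).1) := fun j =>
      (LinearMap.toContinuousLinearMap ((LinearMap.proj j).comp E.toLinearMap)).isBigO_comp _ _
    refine ⟨φ₁ ∘ φ₂, hφ₁.comp hφ₂,
      e.trans ((E.prodCongr (LinearEquiv.refl ℝ ℝ)).trans (Fin.snocLinearEquiv ℝ ℝ m)), q,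
      by omega, ?_⟩
    exact hq.snoc hqm (hs.comp hφ₂.tendsto_atTop)
      fun j => (hcoord j).trans_isLittleO (hw.comp_tendsto hφ₂.tendsto_atTop)

end

theorem tendsto_norm_atTop_of_tendsto_apply_atBot {α ι : Type*} [Fintype ι] {l : Filter α}
    {t : α → ι → ℝ} (i : ι) (ht : Tendsto (fun k => t k i) l atBot) :
    Tendsto (fun k => ‖t k‖) l atTop :=
  tendsto_atTop_mono (fun k => (Real.norm_eq_abs (t k i)).symm.trans_le (norm_le_pi_norm _ i))
    (tendsto_abs_atBot_atTop.comp ht)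

/-- any positive sequence converging to a point with h positive coordinates
followed by zeros admits, after passing to a subsequence and applying a monomial change of
coordinates given by an invertible matrix A, a sequence in standard position in dimension
m with g = n - m ≥ h. -/
theorem stmt12 {n h : ℕ} (hhn : h < n) (a : ℕ → Fin n → ℝ)
    (ha : ∀ k i, 0 < a k i) (al : Fin n → ℝ)
    (hpos : ∀ i : Fin n, (i : ℕ) < h → 0 < al i)
    (hzero : ∀ i : Fin n, h ≤ (i : ℕ) → al i = 0)
    (hconv : Tendsto a atTop (𝓝 al)) :
    ∃ (φ : ℕ → ℕ) (A : Matrix (Fin n) (Fin n) ℝ) (g : ℕ) (bl : Fin n → ℝ),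
      StrictMono φ ∧ IsUnit A.det ∧ h ≤ g ∧ g < n ∧
      (∀ i : Fin n, (i : ℕ) < g → 0 < bl i) ∧
      (∀ i : Fin n, g ≤ (i : ℕ) → bl i = 0) ∧
      Tendsto (fun k => fun i : Fin n =>
        Real.exp (∑ j, A i j * Real.log (a (φ k) j))) atTop (𝓝 bl) ∧
      ∀ M : ℕ, ∃ k₀, ∀ k > k₀, ∀ i j : Fin n, (j : ℕ) = (i : ℕ) + 1 → g ≤ (i : ℕ) →
        Real.exp (∑ l, A j l * Real.log (a (φ k) l)) <
          (Real.exp (∑ l, A i l * Real.log (a (φ k) l))) ^ (M : ℝ) := by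
  obtain ⟨m, rfl⟩ : ∃ m, n = h + m := ⟨n - h, by omega⟩
  have hhead (i : Fin h) : Tendsto (fun k => Real.log (a k (Fin.castAdd m i))) atTop
      (𝓝 (Real.log (al (Fin.castAdd m i)))) :=
    (Real.continuousAt_log (hpos (Fin.castAdd m i) (by simp)).ne').tendsto.comp
      (tendsto_pi_nhds.1 hconv _)
  have htail (j : Fin m) : Tendsto (fun k => Real.log (a k (Fin.natAdd h j))) atTop atBot :=
    Real.tendsto_log_nhdsGT_zero.comp <| tendsto_nhdsWithin_iff.2
      ⟨hzero (Fin.natAdd h j) (by simp) ▸ tendsto_pi_nhds.1 hconv _, .of_forall fun k => ha k _⟩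
  obtain ⟨φ, hφ, E, q, -, hq⟩ := exists_subseq_isLogStandardPosition (finrank_fin_fun ℝ)
    fun k j => Real.log (a k (Fin.natAdd h j))
  have hqm : q < m := hq.lt_of_tendsto_norm_atTop E <|
    tendsto_norm_atTop_of_tendsto_apply_atBot ⟨0, by omega⟩ ((htail _).comp hφ.tendsto_atTop)
  set F := ((Fin.appendLinearEquiv ℝ ℝ h m).symm.trans
    ((LinearEquiv.refl ℝ _).prodCongr E)).trans (Fin.appendLinearEquiv ℝ ℝ h m)
  set A := LinearMap.toMatrix' F.toLinearMap
  have hA (y : Fin (h + m) → ℝ) (i) : ∑ j, A i j * y j = F y i :=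
    congrFun (LinearMap.toMatrix'_mulVec F.toLinearMap y) i
  have hlog : IsLogStandardPosition
      (fun k i => ∑ j, A i j * Real.log (a (φ k) j)) (h + q) := by
    simp only [hA]
    exact hq.append fun i => ⟨_, (hhead i).comp hφ.tendsto_atTop⟩
  obtain ⟨bl, hbl_pos, hbl_zero, hbl⟩ := hlog.exists_tendsto_exp
  refine ⟨φ, A, h + q, bl, hφ, ?_, by omega, by omega, hbl_pos, hbl_zero, hbl, fun M => ?_⟩
  · rw [LinearMap.det_toMatrix']
    exact F.isUnit_det'
  · obtain ⟨k₀, hk₀⟩ := eventually_atTop.1 (hlog.eventually_exp_lt_exp_rpow M)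
    exact ⟨k₀, fun k hk => hk₀ k hk.le⟩
end

section
/- For a sequence x(k) in ℝⁿ converging to a point y, there exists a flag (V₀,…,V_h) of subspaces of ℝⁿ (V₀ ⊂ V₁ ⊂ ⋯ ⊂ V_h with dim V_i = i) and a subsequence of x(k) converging to y along this flag, meaning: each x(k) − y ∈ V_h \ V_{h−1}, and for each i ∈ {0,…,h−2}, the images of x(k) − y under the canonical projection π_i: V_h \ V_i → P(V_h / V_i) converge to the point π_i(V_{i+1}). -/
/-!
Build the flag one step at a time, starting from `V₀ = 0`. If infinitely many terms of
`x k - y` lie in the current `Vᵢ`, stop there. Otherwise keep the terms outside `Vᵢ`; their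
classes in `ℙ(ℝⁿ / Vᵢ)` live in a sequentially compact space (normalize to the unit
sphere), so a subsequence converges to the class of some `z ∉ Vᵢ`, and we continue with
`Vᵢ₊₁ = Vᵢ ⊔ ℝ z`. Since `dim Vᵢ = i`, this stops after at most `n` steps.
-/

open Filter Topology

/-- The quotient topology on the projectivization of a topological vector space. -/
noncomputable instance projTopology {K V : Type*} [DivisionRing K] [AddCommGroup V]
    [Module K V] [TopologicalSpace V] : TopologicalSpace (Projectivization K V) := by
  unfold Projectivization
  infer_instance

namespace Projectivization

theorem tendsto_mk {K V : Type*} [DivisionRing K] [AddCommGroup V] [Module K V]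
    [TopologicalSpace V] {f : ℕ → V} {w : V} (hf : ∀ k, f k ≠ 0) (hw : w ≠ 0)
    (h : Tendsto f atTop (𝓝 w)) :
    Tendsto (fun k => mk K (f k) (hf k)) atTop (𝓝 (mk K w hw)) :=
  (continuous_quot_mk.tendsto (⟨w, hw⟩ : {v : V // v ≠ 0})).comp
    (tendsto_subtype_rng.mpr h)

theorem exists_subseq_tendsto_mk {F : Type*} [NormedAddCommGroup F] [NormedSpace ℝ F]
    [FiniteDimensional ℝ F] (f : ℕ → F) (hf : ∀ k, f k ≠ 0) :
    ∃ (w : F) (hw : w ≠ 0) (ψ : ℕ → ℕ), StrictMono ψ ∧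
      Tendsto (fun k => mk ℝ (f (ψ k)) (hf (ψ k))) atTop (𝓝 (mk ℝ w hw)) := by
  set u : ℕ → F := fun k => ‖f k‖⁻¹ • f k
  have hu : ∀ k, u k ∈ Metric.sphere (0 : F) 1 := fun k => by
    simp [u, norm_smul, hf k]
  obtain ⟨w, hw, ψ, hψ, hlim⟩ := (isCompact_sphere (0 : F) 1).tendsto_subseq hu
  have hw0 : w ≠ 0 := ne_zero_of_mem_unit_sphere ⟨w, hw⟩
  have hu0 : ∀ k, u k ≠ 0 := fun k => ne_zero_of_mem_unit_sphere ⟨u k, hu k⟩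
  refine ⟨w, hw0, ψ, hψ, ?_⟩
  refine (tendsto_mk (K := ℝ) (f := u ∘ ψ) (fun k => hu0 (ψ k)) hw0 hlim).congr fun k => ?_
  exact (mk_eq_mk_iff' ℝ _ _ _ _).mpr ⟨‖f (ψ k)‖⁻¹, rfl⟩

end Projectivization

variable {E : Type*} [NormedAddCommGroup E] [NormedSpace ℝ E] [FiniteDimensional ℝ E]

theorem Submodule.exists_subseq_tendsto_mk_mkQ (V : Submodule ℝ E) (v : ℕ → E)
    (hv : ∀ k, v k ∉ V) :
    ∃ (z : E) (hz : V.mkQ z ≠ 0) (ψ : ℕ → ℕ), StrictMono ψ ∧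
      ∀ hq : ∀ k, V.mkQ (v (ψ k)) ≠ 0,
        Tendsto (fun k => Projectivization.mk ℝ (V.mkQ (v (ψ k))) (hq k)) atTop
          (𝓝 (Projectivization.mk ℝ (V.mkQ z) hz)) := by
  -- makes `E ⧸ V` a normed space rather than only a seminormed one
  have : IsClosed (V : Set E) := V.closed_of_finiteDimensional
  have hq : ∀ k, V.mkQ (v k) ≠ 0 := fun k => by simpa using hv k
  obtain ⟨w, hw, ψ, hψ, hlim⟩ := Projectivization.exists_subseq_tendsto_mk _ hq
  obtain ⟨z, rfl⟩ := V.mkQ_surjective w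
  exact ⟨z, hw, ψ, hψ, fun _ => hlim⟩

open Module in
theorem Submodule.exists_subseq_flag (V : Submodule ℝ E) (v : ℕ → E) :
    ∃ (m : ℕ) (W : ℕ → Submodule ℝ E) (φ : ℕ → ℕ), StrictMono φ ∧ W 0 = V ∧
      (∀ j ≤ m, finrank ℝ (W j) = finrank ℝ V + j) ∧
      (∀ j < m, W j < W (j + 1)) ∧
      (∀ k, v (φ k) ∈ W m) ∧
      (m = 0 ∨ ∀ k, v (φ k) ∉ W (m - 1)) ∧
      ∀ j < m, ∃ (z : E) (hz : (W j).mkQ z ≠ 0), z ∈ W (j + 1) ∧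
        ∀ hq : ∀ k, (W j).mkQ (v (φ k)) ≠ 0,
          Tendsto (fun k => Projectivization.mk ℝ ((W j).mkQ (v (φ k))) (hq k)) atTop
            (𝓝 (Projectivization.mk ℝ ((W j).mkQ z) hz)) := by
  induction V using WellFoundedGT.induction generalizing v with
  | _ V ih =>
  by_cases hfreq : ∃ᶠ k in atTop, v k ∈ V
  · obtain ⟨φ, hφ, hmem⟩ := extraction_of_frequently_atTop hfreq
    exact ⟨0, fun _ => V, φ, hφ, rfl, by simp, by simp, hmem, Or.inl rfl, by simp⟩
  obtain ⟨φ₀, hφ₀, hnotMem⟩ :=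
    extraction_of_frequently_atTop (not_frequently.mp hfreq).frequently
  obtain ⟨z, hz, ψ, hψ, hlim⟩ := V.exists_subseq_tendsto_mk_mkQ (v ∘ φ₀) hnotMem
  have hzV : z ∉ V := by simpa using hz
  have hVz : V < V ⊔ ℝ ∙ z := left_lt_sup.mpr <| by
    simpa [Submodule.span_singleton_le_iff_mem] using hzV
  obtain ⟨m, W, φ, hφ, hW0, hrank, hlt, hmem, hnotMem', hconv⟩ :=
    ih _ hVz (v ∘ φ₀ ∘ ψ)
  refine ⟨m + 1, fun | 0 => V | j + 1 => W j, φ₀ ∘ ψ ∘ φ, hφ₀.comp (hψ.comp hφ),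
    rfl, ?_, ?_, hmem, Or.inr ?_, ?_⟩
  · rintro (_ | j) hj
    · simp
    · simp [hrank j (by omega), finrank_sup_span_singleton hzV, add_assoc, add_comm 1]
  · rintro (_ | j) hj
    · simpa [hW0] using hVz
    · exact hlt j (by omega)
  · intro k
    rcases m with _ | m
    · exact hnotMem (ψ (φ k))
    · exact hnotMem'.resolve_left m.succ_ne_zero k
  · rintro (_ | j) hj
    · refine ⟨z, hz, ?_, fun hq => ?_⟩
      · show z ∈ W 0
        exact hW0 ▸ Submodule.mem_sup_right (Submodule.mem_span_singleton_self z)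
      · exact (hlim fun k => by simpa using hnotMem (ψ k)).comp hφ.tendsto_atTop
    · exact hconv j (by omega)

theorem stmt13_general {n : ℕ} (x : ℕ → Fin n → ℝ) (y : Fin n → ℝ) :
    ∃ (h : ℕ) (W : ℕ → Submodule ℝ (Fin n → ℝ)) (φ : ℕ → ℕ),
      StrictMono φ ∧ h ≤ n ∧
      (∀ i ≤ h, Module.finrank ℝ (W i) = i) ∧
      (∀ i < h, W i < W (i + 1)) ∧
      (∀ k, x (φ k) - y ∈ W h) ∧
      (h = 0 ∨ ∀ k, x (φ k) - y ∉ W (h - 1)) ∧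
      ∀ i, i + 2 ≤ h →
        ∃ (w : (Fin n → ℝ) ⧸ W i) (hw : w ≠ 0),
          (∃ u ∈ W (i + 1), Submodule.mkQ (W i) u = w) ∧
          ∀ hq : ∀ k, Submodule.mkQ (W i) (x (φ k) - y) ≠ 0,
            Tendsto
              (fun k => Projectivization.mk ℝ (Submodule.mkQ (W i) (x (φ k) - y)) (hq k))
              atTop (𝓝 (Projectivization.mk ℝ w hw)) := by
  obtain ⟨h, W, φ, hφ, -, hrank, hlt, hmem, hnotMem, hconv⟩ :=
    (⊥ : Submodule ℝ (Fin n → ℝ)).exists_subseq_flag (fun k => x k - y)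
  have hrank' : ∀ i ≤ h, Module.finrank ℝ (W i) = i := by simpa using hrank
  refine ⟨h, W, φ, hφ, ?_, hrank', hlt, hmem, hnotMem, fun i hi => ?_⟩
  · simpa [hrank' h le_rfl] using (W h).finrank_le
  · obtain ⟨z, hz, hzW, hlim⟩ := hconv i (by omega)
    exact ⟨_, hz, ⟨z, hzW, rfl⟩, hlim⟩

/-- every sequence converging to y admits a subsequence converging to y
along a flag (V₀,…,V_h): x(k) − y ∈ V_h \ V_{h−1}, and for i ≤ h−2 the projective classes
of x(k) − y in P(ℝⁿ/V_i) converge to the point determined by V_{i+1}. -/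
theorem stmt13 {n : ℕ} (x : ℕ → Fin n → ℝ) (y : Fin n → ℝ)
    (hx : Tendsto x atTop (𝓝 y)) :
    ∃ (h : ℕ) (W : ℕ → Submodule ℝ (Fin n → ℝ)) (φ : ℕ → ℕ),
      StrictMono φ ∧ h ≤ n ∧
      (∀ i ≤ h, Module.finrank ℝ (W i) = i) ∧
      (∀ i < h, W i < W (i + 1)) ∧
      (∀ k, x (φ k) - y ∈ W h) ∧
      (h = 0 ∨ ∀ k, x (φ k) - y ∉ W (h - 1)) ∧
      ∀ i, i + 2 ≤ h →
        ∃ (w : (Fin n → ℝ) ⧸ W i) (hw : w ≠ 0),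
          (∃ u ∈ W (i + 1), Submodule.mkQ (W i) u = w) ∧
          ∀ hq : ∀ k, Submodule.mkQ (W i) (x (φ k) - y) ≠ 0,
            Tendsto
              (fun k => Projectivization.mk ℝ (Submodule.mkQ (W i) (x (φ k) - y)) (hq k))
              atTop (𝓝 (Projectivization.mk ℝ w hw)) :=
  stmt13_general x y
end

section
/- The logarithmic limit set of V = {(x,y) ∈ (ℝ_{>0})² : y = sin(1/x)} is {(x,y) ∈ ℝ² : (x ≤ 0 and y ≤ 0) or (x ≥ 0 and y = −x)}; in particular, this logarithmic limit set contains a 2-dimensional piece even though V is 1-dimensional. -/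
open Filter Topology

/-!
Since `y = sin (1 / x) ≤ 1`, every limit point has `p 1 ≤ 0`. Where `x → ∞`, Jordan's
inequality gives `sin (1 / x) ≍ 1 / x`, i.e. `log y = -log x + O(1)`, which forces
`p 1 = -p 0` when `p 0 > 0`. Conversely, with the scale `t = e^{-(k+1)}`: points with
`p 0 ≥ 0`, `p 1 = -p 0` come from `x = e^{p 0 (k+1)}`, and any `p 0, p 1 ≤ 0` comes from
`x = 1 / u` with `u ≈ e^{-p 0 (k+1)}` chosen, by periodicity, such that `sin u = e^{p 1 (k+1)}`.
-/

open Real Set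

lemma tendsto_mul_of_abs_sub_le {ι : Type*} {l : Filter ι} {s f g : ι → ℝ} {C L : ℝ}
    (hs : Tendsto s l (𝓝 0)) (hfg : ∀ᶠ k in l, |f k - g k| ≤ C)
    (hg : Tendsto (fun k => s k * g k) l (𝓝 L)) :
    Tendsto (fun k => s k * f k) l (𝓝 L) := by
  have hr : Tendsto (fun k => s k * (f k - g k)) l (𝓝 0) := by
    refine squeeze_zero_norm' ?_ (by simpa using hs.norm.mul_const C)
    filter_upwards [hfg] with k hk
    rw [norm_mul, Real.norm_eq_abs (f k - g k)]
    exact mul_le_mul_of_nonneg_left hk (norm_nonneg _)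
  simpa [mul_sub] using hg.add hr

lemma tendsto_one_div_add_one_mul_of_abs_sub_le {X : ℕ → ℝ} {c C : ℝ}
    (h : ∀ k : ℕ, |X k - c * ((k : ℝ) + 1)| ≤ C) :
    Tendsto (fun k : ℕ => 1 / ((k : ℝ) + 1) * X k) atTop (𝓝 c) := by
  refine tendsto_mul_of_abs_sub_le tendsto_one_div_add_atTop_nhds_zero_nat
    (Eventually.of_forall h) (tendsto_const_nhds.congr fun k => ?_)
  field_simp

lemma tendsto_neg_one_div_log_nhdsGT_zero :
    Tendsto (fun t => -1 / log t) (𝓝[>] 0) (𝓝[>] 0) := by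
  refine tendsto_nhdsWithin_iff.2 ⟨?_, ?_⟩
  · simpa [neg_div] using
      (tendsto_inv_atBot_zero.comp tendsto_log_nhdsGT_zero).neg
  · filter_upwards [Ioo_mem_nhdsGT one_pos] with t ht
    exact div_pos_of_neg_of_neg neg_one_lt_zero (log_neg ht.1 ht.2)

/-- Along the scale `t k = e^{-(k+1)}` the factor `-1 / log t` is `1 / (k+1)`. -/
lemma mem_logLimit_of_tendsto {n : ℕ} {V : Set (Fin n → ℝ)} {p : Fin n → ℝ}
    (x : ℕ → Fin n → ℝ) (hx : ∀ k, x k ∈ V)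
    (h : ∀ i, Tendsto (fun k : ℕ => 1 / ((k : ℝ) + 1) * log (x k i)) atTop (𝓝 (p i))) :
    p ∈ logLimit V := by
  have hk : ∀ k : ℕ, (0 : ℝ) < k + 1 := fun k => by positivity
  refine ⟨x, fun k => exp (-((k : ℝ) + 1)), hx, fun k => ⟨exp_pos _, ?_⟩, ?_, ?_⟩
  · exact exp_lt_one_iff.2 (neg_lt_zero.2 (hk k))
  · exact tendsto_exp_neg_atTop_nhds_zero.comp
      (tendsto_atTop_add_const_right _ 1 tendsto_natCast_atTop_atTop)
  · refine tendsto_pi_nhds.2 fun i => (h i).congr fun k => ?_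
    rw [log_exp, div_neg, neg_div, neg_neg]

lemma abs_log_sin_one_div_add_log_le {x : ℝ} (hx : 1 ≤ x) :
    |log (sin (1 / x)) + log x| ≤ log (π / 2) := by
  have hx0 : 0 < x := one_pos.trans_le hx
  have hu0 : 0 < 1 / x := by positivity
  have hu1 : 1 / x ≤ π / 2 := ((div_le_one hx0).2 hx).trans (by linarith [pi_gt_three])
  have hlow := mul_le_sin hu0.le hu1
  have hsin : 0 < sin (1 / x) := lt_of_lt_of_le (by positivity) hlow
  have hlogx : log (1 / x) = -log x := by rw [one_div, log_inv]
  rw [abs_le]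
  constructor
  · have := log_le_log (by positivity) hlow
    rw [log_mul (by positivity) hu0.ne', hlogx, log_div two_ne_zero pi_ne_zero] at this
    rw [log_div pi_ne_zero two_ne_zero]
    linarith
  · have := log_le_log hsin (sin_le hu0.le)
    rw [hlogx] at this
    linarith [log_nonneg (by linarith [pi_gt_three] : (1 : ℝ) ≤ π / 2)]

lemma sin_one_div_pos {x : ℝ} (hx : 1 ≤ x) : 0 < sin (1 / x) := by
  have hx0 : 0 < x := one_pos.trans_le hx
  refine sin_pos_of_pos_of_lt_pi (by positivity) ?_
  exact ((div_le_one hx0).2 hx).trans_lt (by linarith [pi_gt_three])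

lemma exists_sin_eq_mem_Icc {c : ℝ} (hc : c ∈ Icc (-1) 1) (M : ℝ) :
    ∃ u ∈ Icc M (M + 3 * π), sin u = c := by
  set n := ⌈(M + π / 2) / (2 * π)⌉
  have h2π : 0 < 2 * π := by positivity
  have hn₁ : M + π / 2 ≤ n * (2 * π) := (div_le_iff₀ h2π).1 (Int.le_ceil _)
  have hn₂ : n * (2 * π) < M + π / 2 + 2 * π :=
    (mul_lt_mul_of_pos_right (Int.ceil_lt_add_one _) h2π).trans_eq (by field_simp)
  refine ⟨arcsin c + n * (2 * π), ⟨?_, ?_⟩, ?_⟩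
  · linarith [neg_pi_div_two_le_arcsin c]
  · linarith [arcsin_le_pi_div_two c]
  · rw [sin_add_int_mul_two_pi, sin_arcsin hc.1 hc.2]

lemma abs_log_sub_log_le_of_mem_Icc {M u C : ℝ} (hM : 1 ≤ M) (hu : u ∈ Icc M (M + C)) :
    |log u - log M| ≤ C := by
  have hM0 : 0 < M := one_pos.trans_le hM
  have hu0 : 0 < u := hM0.trans_le hu.1
  rw [abs_of_nonneg (sub_nonneg.2 (log_le_log hM0 hu.1)), ← log_div hu0.ne' hM0.ne']
  calc log (u / M) ≤ u / M - 1 := log_le_sub_one_of_pos (by positivity)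
    _ = (u - M) / M := by field_simp
    _ ≤ u - M := div_le_self (sub_nonneg.2 hu.1) hM
    _ ≤ C := by linarith [hu.2]

def sinCurve : Set (Fin 2 → ℝ) := {p | 0 < p 0 ∧ 0 < p 1 ∧ p 1 = sin (1 / p 0)}

lemma logLimit_sinCurve_subset :
    logLimit sinCurve ⊆ {p | (p 0 ≤ 0 ∧ p 1 ≤ 0) ∨ (0 ≤ p 0 ∧ p 1 = -(p 0))} := by
  rintro p ⟨x, t, hxV, ht, ht0, hlim⟩
  set s := fun k => -1 / log (t k)
  have hs : Tendsto s atTop (𝓝[>] 0) := tendsto_neg_one_div_log_nhdsGT_zero.comp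
    (tendsto_nhdsWithin_iff.2 ⟨ht0, Eventually.of_forall fun k => (ht k).1⟩)
  have hs0 : ∀ k, 0 < s k := fun k =>
    div_pos_of_neg_of_neg neg_one_lt_zero (log_neg (ht k).1 (ht k).2)
  have h0 : Tendsto (fun k => s k * log (x k 0)) atTop (𝓝 (p 0)) := tendsto_pi_nhds.1 hlim 0
  have h1 : Tendsto (fun k => s k * log (x k 1)) atTop (𝓝 (p 1)) := tendsto_pi_nhds.1 hlim 1
  have hb : p 1 ≤ 0 := by
    refine le_of_tendsto' h1 fun k => mul_nonpos_of_nonneg_of_nonpos (hs0 k).le ?_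
    exact log_nonpos (hxV k).2.1.le ((hxV k).2.2 ▸ sin_le_one _)
  rcases le_or_gt (p 0) 0 with ha | ha
  · exact Or.inl ⟨ha, hb⟩
  refine Or.inr ⟨ha.le, tendsto_nhds_unique h1 ?_⟩
  have hx1 : ∀ᶠ k in atTop, 1 ≤ x k 0 := by
    filter_upwards [h0.eventually_const_lt ha] with k hk
    exact ((log_pos_iff (hxV k).1.le).1 (pos_of_mul_pos_right hk (hs0 k).le)).le
  refine tendsto_mul_of_abs_sub_le (tendsto_nhds_of_tendsto_nhdsWithin hs)
    (g := fun k => -log (x k 0)) (C := log (π / 2)) ?_ (by simpa only [mul_neg] using h0.neg)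
  filter_upwards [hx1] with k hk
  rw [(hxV k).2.2, sub_neg_eq_add]
  exact abs_log_sin_one_div_add_log_le hk

lemma mem_logLimit_sinCurve_of_tendsto {p : Fin 2 → ℝ} (X : ℕ → ℝ) (hX : ∀ k, 0 < X k)
    (hsin : ∀ k, 0 < sin (1 / X k))
    (h0 : Tendsto (fun k : ℕ => 1 / ((k : ℝ) + 1) * log (X k)) atTop (𝓝 (p 0)))
    (h1 : Tendsto (fun k : ℕ => 1 / ((k : ℝ) + 1) * log (sin (1 / X k))) atTop (𝓝 (p 1))) :
    p ∈ logLimit sinCurve :=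
  mem_logLimit_of_tendsto (fun k => ![X k, sin (1 / X k)]) (fun k => ⟨hX k, hsin k, rfl⟩)
    (Fin.forall_fin_two.2 ⟨h0, h1⟩)

lemma mem_logLimit_sinCurve_of_nonneg {p : Fin 2 → ℝ} (ha : 0 ≤ p 0) (hb : p 1 = -p 0) :
    p ∈ logLimit sinCurve := by
  have hX : ∀ k : ℕ, 1 ≤ exp (p 0 * ((k : ℝ) + 1)) := fun k => one_le_exp (by positivity)
  refine mem_logLimit_sinCurve_of_tendsto _ (fun k => exp_pos _)
    (fun k => sin_one_div_pos (hX k)) ?_ ?_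
  · exact tendsto_one_div_add_one_mul_of_abs_sub_le (C := 0) fun k => by simp
  · refine hb ▸ tendsto_one_div_add_one_mul_of_abs_sub_le (C := log (π / 2)) fun k => ?_
    simpa [log_exp] using abs_log_sin_one_div_add_log_le (hX k)

lemma mem_logLimit_sinCurve_of_nonpos {p : Fin 2 → ℝ} (ha : p 0 ≤ 0) (hb : p 1 ≤ 0) :
    p ∈ logLimit sinCurve := by
  have hM : ∀ k : ℕ, 1 ≤ exp (-p 0 * ((k : ℝ) + 1)) := fun k =>
    one_le_exp (mul_nonneg (neg_nonneg.2 ha) (by positivity))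
  have hc : ∀ k : ℕ, exp (p 1 * ((k : ℝ) + 1)) ∈ Icc (-1) 1 := fun k =>
    ⟨(neg_one_lt_zero.trans (exp_pos _)).le,
      exp_le_one_iff.2 (mul_nonpos_of_nonpos_of_nonneg hb (by positivity))⟩
  choose u hu hsin using fun k => exists_sin_eq_mem_Icc (hc k) (exp (-p 0 * ((k : ℝ) + 1)))
  have hu0 : ∀ k, 0 < u k := fun k => (exp_pos _).trans_le (hu k).1
  refine mem_logLimit_sinCurve_of_tendsto (fun k => 1 / u k) (fun k => one_div_pos.2 (hu0 k))
    (fun k => by simp only [one_div_one_div, hsin, exp_pos]) ?_ ?_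
  · refine tendsto_one_div_add_one_mul_of_abs_sub_le (C := 3 * π) fun k => ?_
    have := abs_log_sub_log_le_of_mem_Icc (hM k) (hu k)
    rw [log_exp] at this
    rw [one_div, log_inv, ← abs_neg]
    convert this using 2
    ring
  · exact tendsto_one_div_add_one_mul_of_abs_sub_le (C := 0) fun k => by
      simp [hsin, log_exp]

/-- the logarithmic limit set of {(x, sin(1/x)) : x > 0, sin(1/x) > 0} is
{x ≤ 0 and y ≤ 0} ∪ {x ≥ 0 and y = −x}; in particular it is 2-dimensional although the
set is a curve. -/
theorem stmt15 :
    logLimit {p : Fin 2 → ℝ | 0 < p 0 ∧ 0 < p 1 ∧ p 1 = Real.sin (1 / p 0)} =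
      {p : Fin 2 → ℝ | (p 0 ≤ 0 ∧ p 1 ≤ 0) ∨ (0 ≤ p 0 ∧ p 1 = -(p 0))} := by
  refine Subset.antisymm logLimit_sinCurve_subset ?_
  rintro p (⟨ha, hb⟩ | ⟨ha, hb⟩)
  · exact mem_logLimit_sinCurve_of_nonpos ha hb
  · exact mem_logLimit_sinCurve_of_nonneg ha hb
end
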